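/- Let Λ be an Artin algebra and C a subcategory of mod Λ closed under direct sums with Φ-dim(C) = n < ∞. If Ψ-dim(C) = m < ∞, then fin.dim(add Ω^n C) ≤ m − n < ∞. -/

import Mathlib

open scoped Classical

/-- An abstract model of the category `mod Λ` of finitely generated left modules over
an Artin algebra `Λ`, presented through the Krull–Schmidt theorem: a finitely
generated module is (the isomorphism class of) a finite multiset of indecomposable
modules.  The data records which indecomposables are projective, and the multiset of
indecomposable direct summands of the syzygy of each indecomposable (the kernel of a
projective cover). -/
structure ModData where
  /-- iso classes of indecomposable finitely generated modules -/
  Idec : Type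
  /-- which indecomposables are projective -/
  proj : Idec → Prop
  /-- the syzygy of an indecomposable -/
  syz : Idec → Multiset Idec

namespace ModData

variable (Λ : ModData)

/-- finitely generated `Λ`-modules (multisets of indecomposables) -/
abbrev Mod := Multiset Λ.Idec

/-- the syzygy operator `Ω` (extended additively) -/
def Ω (X : Λ.Mod) : Λ.Mod := X.bind Λ.syz

/-- `X` is a projective module -/
def IsProj (X : Λ.Mod) : Prop := ∀ i ∈ X, Λ.proj i

/-- the projective dimension `pd X ∈ ℕ∞`: the least `m` with `Ω^[m] X` projective
(and `⊤` if there is no such `m`) -/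
noncomputable def pd (X : Λ.Mod) : ℕ∞ :=
  sInf ((fun m : ℕ => (m : ℕ∞)) '' {m : ℕ | Λ.IsProj (Λ.Ω^[m] X)})

/-- the free abelian group `K` on the iso classes of indecomposable non-projective
finitely generated modules -/
abbrev K := FreeAbelianGroup {i : Λ.Idec // ¬ Λ.proj i}

/-- the class `[X]` of an indecomposable in `K` (projectives are sent to `0`) -/
noncomputable def cls (i : Λ.Idec) : Λ.K :=
  if h : Λ.proj i then 0 else FreeAbelianGroup.of ⟨i, h⟩

/-- the class `[X] ∈ K` of a module `X` -/
noncomputable def clsM (X : Λ.Mod) : Λ.K := (X.map Λ.cls).sum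

/-- the endomorphism `L` of `K` with `L [X] = [Ω X]` -/
noncomputable def L : Λ.K →+ Λ.K :=
  FreeAbelianGroup.lift fun i => Λ.clsM (Λ.syz i.1)

/-- `⟨X⟩` : the subgroup of `K` generated by the classes of the indecomposable
non-projective direct summands of `X` -/
def gen (X : Λ.Mod) : AddSubgroup Λ.K :=
  AddSubgroup.closure (Λ.cls '' {i | i ∈ X})

/-- the rank of a subgroup of `K` -/
noncomputable def rk (H : AddSubgroup Λ.K) : Cardinal :=
  Module.rank ℤ (AddSubgroup.toIntSubmodule H)

/-- the iterated image `L^k H` of a subgroup of `K` -/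
noncomputable def Lpow (k : ℕ) (H : AddSubgroup Λ.K) : AddSubgroup Λ.K :=
  (fun H' => AddSubgroup.map Λ.L H')^[k] H

/-- the (first) Igusa–Todorov function
`Φ(X) = min {n | rk L^k⟨X⟩ = rk L^(k+1)⟨X⟩ for all k ≥ n}` -/
noncomputable def Phi (X : Λ.Mod) : ℕ :=
  sInf {n : ℕ | ∀ k, n ≤ k →
    Λ.rk (Λ.Lpow k (Λ.gen X)) = Λ.rk (Λ.Lpow (k + 1) (Λ.gen X))}

/-- `add C` : the closure of a class of modules under finite direct sums and
direct summands -/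
def addCl (C : Set Λ.Mod) : Set Λ.Mod :=
  {X | ∃ Y ∈ AddSubmonoid.closure C, X ≤ Y}

/-- `C ⊕ D` : the class of direct sums of a module of `C` and a module of `D` -/
def oplus (C D : Set Λ.Mod) : Set Λ.Mod :=
  {X | ∃ Y ∈ C, ∃ Z ∈ D, X = Y + Z}

/-- the finitistic dimension of a class:
`fin.dim C = sup {pd X | X ∈ C, pd X < ∞}` -/
noncomputable def findim (C : Set Λ.Mod) : ℕ∞ :=
  sSup (Λ.pd '' {X | X ∈ C ∧ Λ.pd X ≠ ⊤})

/-- the (second) Igusa–Todorov function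
`Ψ(X) = Φ(X) + fin.dim (add Ω^(Φ X) X)` -/
noncomputable def Psi (X : Λ.Mod) : ℕ∞ :=
  (Λ.Phi X : ℕ∞) + Λ.findim (Λ.addCl {Λ.Ω^[Λ.Phi X] X})

/-- the `Φ`-dimension of a class -/
noncomputable def PhiDim (C : Set Λ.Mod) : ℕ∞ := ⨆ X ∈ C, (Λ.Phi X : ℕ∞)

/-- the `Ψ`-dimension of a class -/
noncomputable def PsiDim (C : Set Λ.Mod) : ℕ∞ := ⨆ X ∈ C, Λ.Psi X

/-- `C` is an `(n,t,V,D)`-GLIT class, relative to the relation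
`ses X₁ X₀ Z` ↔ "there is a short exact sequence `0 → X₁ → X₀ → Z → 0`":
`D` is additively closed, `t`-syzygy invariant with `Φ`-dim`(D) < ∞`, and every
`C ∈ 𝒞` admits a s.e.s. `0 → V₁ ⊕ D₁ → V₀ ⊕ D₀ → Ω^n C → 0` with `Vᵢ ∈ add V`,
`Dᵢ ∈ D`. -/
def IsGLIT (ses : Λ.Mod → Λ.Mod → Λ.Mod → Prop) (C : Set Λ.Mod)
    (n t : ℕ) (V : Λ.Mod) (D : Set Λ.Mod) : Prop :=
  1 ≤ t ∧ Λ.addCl D = D ∧ (∀ X ∈ D, Λ.Ω^[t] X ∈ D) ∧ Λ.PhiDim D ≠ ⊤ ∧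
    ∀ X ∈ C, ∃ V₁ ∈ Λ.addCl {V}, ∃ V₀ ∈ Λ.addCl {V}, ∃ D₁ ∈ D, ∃ D₀ ∈ D,
      ses (V₁ + D₁) (V₀ + D₀) (Λ.Ω^[n] X)

/-- the subgroup of `K` generated by the classes of the summands of modules of `D` -/
noncomputable def relSub (D : Set Λ.Mod) : AddSubgroup Λ.K :=
  AddSubgroup.closure (Λ.cls '' {i | ∃ X ∈ D, i ∈ X})

/-- the rank of (the image of) a subgroup of `K` in the quotient of `K` by the
classes of modules of `D` -/
noncomputable def rkRel (D : Set Λ.Mod) (H : AddSubgroup Λ.K) : Cardinal :=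
  Module.rank ℤ
    ((AddSubgroup.toIntSubmodule H).map (AddSubgroup.toIntSubmodule (Λ.relSub D)).mkQ)

/-- the generalized Igusa–Todorov function `Φ_{[D]}` relative to a class `D`:
defined as `Φ`, but with ranks computed in the quotient of `K` by the subgroup
generated by the classes of modules in `D` (and of projectives) -/
noncomputable def PhiRel (D : Set Λ.Mod) (X : Λ.Mod) : ℕ :=
  sInf {n : ℕ | ∀ k, n ≤ k →
    Λ.rkRel D (Λ.Lpow k (Λ.gen X)) = Λ.rkRel D (Λ.Lpow (k + 1) (Λ.gen X))}

end ModData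

/-!
Monotonicity of `Φ` drives the argument. If `⟨X⟩ ≤ ⟨Y⟩` and `L` preserves the rank of
`L^k⟨Y⟩`, then `L` is injective on the finitely generated free group `L^k⟨Y⟩`, hence on
`L^k⟨X⟩`, so it preserves the rank of `L^k⟨X⟩` as well: `Φ(X) ≤ Φ(Y)`. Now let `X` be a summand
of `Ω^n Z` with `Z ∈ C`. Since `C` is closed under sums, the maximum `n` of `Φ` on `C` is
attained at some `Z'`, and then `Φ(Z ⊕ Z') = n` by monotonicity. Hence `X ∈ add Ω^n (Z ⊕ Z')`,
and `pd X ≤ Ψ(Z ⊕ Z') - Φ(Z ⊕ Z') ≤ m - n`.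
-/

universe u

theorem Submodule.rank_map_eq_of_le_of_rank_map_eq {R : Type*} {M N : Type u} [CommRing R]
    [IsDomain R] [AddCommGroup M] [Module R M] [Module.IsTorsionFree R M]
    [AddCommGroup N] [Module R N]
    (f : M →ₗ[R] N) {G H : Submodule R M} [Module.Finite R H] (hGH : G ≤ H)
    (hH : Module.rank R (H.map f) = Module.rank R H) :
    Module.rank R (G.map f) = Module.rank R G := by
  have hH_ker : Disjoint H (LinearMap.ker f) :=
    Submodule.disjoint_ker_of_finrank_le f (congrArg Cardinal.toNat hH).ge
  have hG_inj : Function.Injective (f.domRestrict G) :=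
    LinearMap.injective_domRestrict_iff.mpr (hH_ker.mono_left hGH)
  rw [← LinearMap.range_domRestrict, ← rank_range_of_injective _ hG_inj]

theorem AddSubmonoid.eq_zero_or_mem_of_mem_closure {M : Type*} [AddMonoid M] {S : Set M}
    (hS : ∀ x ∈ S, ∀ y ∈ S, x + y ∈ S) {x : M} (hx : x ∈ AddSubmonoid.closure S) :
    x = 0 ∨ x ∈ S := by
  induction hx using AddSubmonoid.closure_induction with
  | mem x hx => exact .inr hx
  | zero => exact .inl rfl
  | add x y _ _ hx hy =>
    rcases hx with rfl | hx <;> rcases hy with rfl | hy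
    · simp
    · simp [hy]
    · simp [hx]
    · exact .inr (hS x hx y hy)

namespace ModData

variable {Λ : ModData}

theorem toIntSubmodule_Lpow_succ (k : ℕ) (H : AddSubgroup Λ.K) :
    (Λ.Lpow (k + 1) H).toIntSubmodule = (Λ.Lpow k H).toIntSubmodule.map Λ.L.toIntLinearMap := by
  rw [Lpow, Function.iterate_succ_apply']
  rfl

theorem Lpow_mono (k : ℕ) : Monotone (Λ.Lpow k) := by
  induction k with
  | zero => exact monotone_id
  | succ k ih =>
    intro G H hGH
    simpa only [Lpow, Function.iterate_succ_apply'] using AddSubgroup.map_mono (ih hGH)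

instance (k : ℕ) (X : Λ.Mod) : Module.Finite ℤ (Λ.Lpow k (Λ.gen X)).toIntSubmodule := by
  refine Module.Finite.iff_fg.mpr ?_
  induction k with
  | zero =>
    rw [Lpow, Function.iterate_zero_apply, gen, AddSubgroup.toIntSubmodule_closure]
    exact Submodule.fg_span (X.finite_toSet.image _)
  | succ k ih =>
    rw [toIntSubmodule_Lpow_succ]
    exact ih.map _

theorem rk_Lpow_succ_le (k : ℕ) (H : AddSubgroup Λ.K) :
    Λ.rk (Λ.Lpow (k + 1) H) ≤ Λ.rk (Λ.Lpow k H) := by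
  rw [rk, toIntSubmodule_Lpow_succ]
  exact rank_map_le _ _

theorem rk_Lpow_succ_eq_of_le {G H : AddSubgroup Λ.K} (hGH : G ≤ H) {k : ℕ}
    [Module.Finite ℤ (Λ.Lpow k H).toIntSubmodule]
    (hH : Λ.rk (Λ.Lpow k H) = Λ.rk (Λ.Lpow (k + 1) H)) :
    Λ.rk (Λ.Lpow k G) = Λ.rk (Λ.Lpow (k + 1) G) := by
  rw [rk, rk, toIntSubmodule_Lpow_succ] at hH ⊢
  have hGH_k := AddSubgroup.toIntSubmodule.monotone (Λ.Lpow_mono k hGH)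
  exact (Submodule.rank_map_eq_of_le_of_rank_map_eq _ hGH_k hH.symm).symm

/-- Cardinals are well-ordered, so no finiteness is needed here. -/
theorem exists_rk_Lpow_stable (H : AddSubgroup Λ.K) :
    ∃ n, ∀ k, n ≤ k → Λ.rk (Λ.Lpow k H) = Λ.rk (Λ.Lpow (k + 1) H) := by
  obtain ⟨n, hn⟩ := WellFoundedLT.antitone_chain_condition (f := fun k => Λ.rk (Λ.Lpow k H))
    (antitone_nat_of_succ_le fun k => Λ.rk_Lpow_succ_le k H)
  exact ⟨n, fun k hk => (hn k hk).symm.trans (hn (k + 1) (hk.trans k.le_succ))⟩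

theorem Phi_spec (X : Λ.Mod) {k : ℕ} (hk : Λ.Phi X ≤ k) :
    Λ.rk (Λ.Lpow k (Λ.gen X)) = Λ.rk (Λ.Lpow (k + 1) (Λ.gen X)) :=
  Nat.sInf_mem (Λ.exists_rk_Lpow_stable (Λ.gen X)) k hk

theorem Phi_le_of_gen_le {X Y : Λ.Mod} (h : Λ.gen X ≤ Λ.gen Y) : Λ.Phi X ≤ Λ.Phi Y :=
  Nat.sInf_le fun _ hk => Λ.rk_Lpow_succ_eq_of_le h (Λ.Phi_spec Y hk)

theorem gen_mono : Monotone Λ.gen := fun _ _ h =>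
  AddSubgroup.closure_mono (Set.image_mono fun _ hi => Multiset.mem_of_le h hi)

theorem Phi_mono : Monotone Λ.Phi := fun _ _ h => Phi_le_of_gen_le (gen_mono h)

theorem iterate_Ω_add (k : ℕ) (X Y : Λ.Mod) : Λ.Ω^[k] (X + Y) = Λ.Ω^[k] X + Λ.Ω^[k] Y := by
  induction k generalizing X Y with
  | zero => rfl
  | succ k ih => simp only [Function.iterate_succ_apply, Ω, Multiset.add_bind, ih]

theorem iterate_Ω_mono (k : ℕ) : Monotone (Λ.Ω^[k]) := by
  intro X Y h
  obtain ⟨Z, rfl⟩ := Multiset.le_iff_exists_add.mp h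
  rw [iterate_Ω_add]
  exact le_add_right le_rfl

theorem pd_zero : Λ.pd 0 = 0 :=
  nonpos_iff_eq_zero.mp (sInf_le ⟨0, fun _ hi => absurd hi (Multiset.notMem_zero _), rfl⟩)

theorem mem_addCl_of_le {C : Set Λ.Mod} {X Y : Λ.Mod} (hY : Y ∈ C) (hXY : X ≤ Y) :
    X ∈ Λ.addCl C :=
  ⟨Y, AddSubmonoid.subset_closure hY, hXY⟩

theorem eq_zero_or_le_of_mem_addCl {C : Set Λ.Mod} (hC : ∀ X ∈ C, ∀ Y ∈ C, X + Y ∈ C)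
    {X : Λ.Mod} (hX : X ∈ Λ.addCl C) : X = 0 ∨ ∃ Y ∈ C, X ≤ Y := by
  obtain ⟨Y, hY, hXY⟩ := hX
  rcases AddSubmonoid.eq_zero_or_mem_of_mem_closure hC hY with rfl | hY
  · exact .inl (Multiset.le_zero.mp hXY)
  · exact .inr ⟨Y, hY, hXY⟩

theorem pd_le_findim {C : Set Λ.Mod} {X : Λ.Mod} (hX : X ∈ C) (hpd : Λ.pd X ≠ ⊤) :
    Λ.pd X ≤ Λ.findim C :=
  le_sSup ⟨X, ⟨hX, hpd⟩, rfl⟩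

theorem findim_le {C : Set Λ.Mod} {b : ℕ∞} (h : ∀ X ∈ C, Λ.pd X ≠ ⊤ → Λ.pd X ≤ b) :
    Λ.findim C ≤ b :=
  sSup_le fun _ ⟨X, ⟨hX, hpd⟩, hX_eq⟩ => hX_eq ▸ h X hX hpd

theorem findim_addCl_le_Psi_sub_Phi (X : Λ.Mod) :
    Λ.findim (Λ.addCl {Λ.Ω^[Λ.Phi X] X}) ≤ Λ.Psi X - Λ.Phi X :=
  ENat.le_sub_of_add_le_left (ENat.natCast_ne_top _) le_rfl

theorem Phi_le_PhiDim {C : Set Λ.Mod} {X : Λ.Mod} (hX : X ∈ C) :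
    (Λ.Phi X : ℕ∞) ≤ Λ.PhiDim C :=
  le_iSup₂ (f := fun X _ => (Λ.Phi X : ℕ∞)) X hX

theorem Psi_le_PsiDim {C : Set Λ.Mod} {X : Λ.Mod} (hX : X ∈ C) : Λ.Psi X ≤ Λ.PsiDim C :=
  le_iSup₂ (f := fun X _ => Λ.Psi X) X hX

theorem exists_Phi_eq_PhiDim {C : Set Λ.Mod} (hC : C.Nonempty) (h : Λ.PhiDim C ≠ ⊤) :
    ∃ X ∈ C, (Λ.Phi X : ℕ∞) = Λ.PhiDim C := by
  have : Nonempty C := hC.to_subtype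
  rw [PhiDim, iSup_subtype'] at h ⊢
  obtain ⟨⟨X, hX⟩, hX_eq⟩ := ENat.exists_eq_iSup_of_lt_top h.lt_top
  exact ⟨X, hX, hX_eq⟩

theorem exists_le_Phi_eq_PhiDim {C : Set Λ.Mod} (hC : ∀ X ∈ C, ∀ Y ∈ C, X + Y ∈ C)
    (h : Λ.PhiDim C ≠ ⊤) {Z : Λ.Mod} (hZ : Z ∈ C) :
    ∃ W ∈ C, Z ≤ W ∧ (Λ.Phi W : ℕ∞) = Λ.PhiDim C := by
  obtain ⟨Z', hZ', hZ'_eq⟩ := exists_Phi_eq_PhiDim ⟨Z, hZ⟩ h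
  have hW := hC Z hZ Z' hZ'
  refine ⟨Z + Z', hW, le_add_right le_rfl, le_antisymm (Phi_le_PhiDim hW) ?_⟩
  exact hZ'_eq ▸ Nat.cast_le.mpr (Phi_mono (le_add_left le_rfl))

end ModData

/-- if `C` is closed under direct sums, `Φ-dim C = n < ∞` and
`Ψ-dim C = m < ∞`, then `fin.dim (add Ω^n C) ≤ m - n < ∞`. -/
theorem findim_syzygies_le_of_PsiDim_finite (Λ : ModData) (C : Set Λ.Mod)
    (hC : ∀ X ∈ C, ∀ Y ∈ C, X + Y ∈ C)
    (n : ℕ) (hn : Λ.PhiDim C = (n : ℕ∞))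
    (m : ℕ) (hm : Λ.PsiDim C = (m : ℕ∞)) :
    Λ.findim (Λ.addCl (Λ.Ω^[n] '' C)) ≤ (m : ℕ∞) - n := by
  have hΩC : ∀ X ∈ Λ.Ω^[n] '' C, ∀ Y ∈ Λ.Ω^[n] '' C, X + Y ∈ Λ.Ω^[n] '' C := by
    rintro _ ⟨Z, hZ, rfl⟩ _ ⟨Z', hZ', rfl⟩
    exact ⟨Z + Z', hC Z hZ Z' hZ', Λ.iterate_Ω_add n Z Z'⟩
  refine Λ.findim_le fun X hX hpd => ?_
  obtain rfl | ⟨_, ⟨Z, hZ, rfl⟩, hXZ⟩ := Λ.eq_zero_or_le_of_mem_addCl hΩC hX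
  · simp [ModData.pd_zero]
  obtain ⟨W, hW, hZW, hW_eq⟩ := Λ.exists_le_Phi_eq_PhiDim hC (hn ▸ ENat.natCast_ne_top n) hZ
  rw [hn, Nat.cast_inj] at hW_eq
  have hXW : X ∈ Λ.addCl {Λ.Ω^[Λ.Phi W] W} :=
    Λ.mem_addCl_of_le rfl (hXZ.trans (hW_eq ▸ Λ.iterate_Ω_mono n hZW))
  calc Λ.pd X ≤ Λ.findim (Λ.addCl {Λ.Ω^[Λ.Phi W] W}) := Λ.pd_le_findim hXW hpd
    _ ≤ Λ.Psi W - Λ.Phi W := Λ.findim_addCl_le_Psi_sub_Phi W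
    _ ≤ m - n := hW_eq ▸ tsub_le_tsub_right (hm ▸ Λ.Psi_le_PsiDim hW) _
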